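/- Let m ≥ 1, let a ∈ ℝ with a ≠ 0, a ≠ 1 and a ≠ −1, and let j be an integer with 1 ≤ j ≤ m−1. Then ∑_{n=0}^{m−1} X_n(a)·X_{(n+j) mod m}(1/a) = 0, where the index (n+j) mod m is taken in {0,…,m−1}. -/

import Mathlib

/-!
Put `q = Q²`, a primitive `m`-th root of unity. Multiplying numerator and denominator by
`Q^(k+1)`, the `k`-th factor of `X_n(a)` becomes `Q (a qᵏ - 1) / (q^(k+1) - a)`, so after
telescoping `X_n(a) X_{n+j}(1/a)` is a constant times `z ∏_{0<i<j} (qⁱ z - a) / ∏_{i≤j} (a qⁱ z - 1)`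
at `z = qⁿ`. Supplying the missing factors `a qⁱ z - 1`, `j < i < m`, turns the denominator into
`∏_{i<m} (a qⁱ z - 1) = (-1)ᵐ (1 - aᵐ)`, which does not depend on `n`, and the numerator into a
polynomial of degree `< m` vanishing at `0`; the average of such a polynomial over the `m`-th roots
of unity is its constant term, `0`. The reduction of `n + j` modulo `m` is harmless because the
factors of `X(1/a)` are `m`-periodic with product `1` over a period (this uses `Qᵐ = -1`).
-/

open Finset

/-- `Q m = exp(πi/m)`. -/
noncomputable def Q (m : ℕ) : ℂ := Complex.exp (Real.pi * Complex.I / m)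

/-- The Fateev–Zamolodchikov coefficients
`X_j(a) = ∏_{k=0}^{j-1} (a·Q^k − Q^{−k})/(Q^{k+1} − a·Q^{−k−1})`. -/
noncomputable def X (m j : ℕ) (a : ℂ) : ℂ :=
  ∏ k ∈ Finset.range j,
    (a * Q m ^ k - Q m ^ (-(k : ℤ))) / (Q m ^ (k + 1) - a * Q m ^ (-((k : ℤ) + 1)))

open Polynomial hiding X

namespace IsPrimitiveRoot

variable {R : Type*} [CommRing R] [IsDomain R] {q : R} {m : ℕ}

theorem prod_range_pow_mul_sub (hq : IsPrimitiveRoot q m) (hm : m ≠ 0) (x y : R) :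
    ∏ k ∈ range m, (q ^ k * y - x) = (-1) ^ m * (x ^ m - y ^ m) := by
  have h := congr_arg (eval x) (X_pow_sub_C_eq_prod hq (Nat.pos_of_ne_zero hm) (rfl : y ^ m = _))
  simp only [eval_sub, eval_pow, eval_X, eval_C, eval_prod] at h
  rw [h, show (-1 : R) ^ m = (-1) ^ #(range m) by rw [card_range], ← prod_neg]
  simp

theorem sum_range_pow_pow_eq_zero (hq : IsPrimitiveRoot q m) {i : ℕ} (hi : i ≠ 0)
    (him : i < m) : ∑ n ∈ range m, (q ^ n) ^ i = 0 := by
  have hqi : q ^ i - 1 ≠ 0 := sub_ne_zero.mpr (hq.pow_ne_one_of_pos_of_lt hi him)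
  refine (mul_eq_zero_iff_right hqi).mp ?_
  simp_rw [← pow_mul, mul_comm _ i, pow_mul]
  rw [geom_sum_mul, ← pow_mul, mul_comm, pow_mul, hq.pow_eq_one, one_pow, sub_self]

theorem sum_eval_pow (hq : IsPrimitiveRoot q m) {p : R[X]} (hp : p.natDegree < m) :
    ∑ n ∈ range m, p.eval (q ^ n) = m * p.eval 0 := by
  simp_rw [← coeff_zero_eq_eval_zero, eval_eq_sum_range' hp]
  rw [sum_comm]
  simp_rw [← mul_sum]
  rw [sum_eq_single_of_mem 0 (mem_range.mpr (by omega))]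
  · simp [mul_comm]
  · intro i hi hi0
    rw [hq.sum_range_pow_pow_eq_zero hi0 (mem_range.mp hi), mul_zero]

end IsPrimitiveRoot

theorem Finset.prod_range_mod_of_periodic {M : Type*} [CommMonoid M] {f : ℕ → M} {m : ℕ}
    (hf : Function.Periodic f m) (hf1 : ∏ k ∈ range m, f k = 1) (N : ℕ) :
    ∏ k ∈ range (N % m), f k = ∏ k ∈ range N, f k := by
  conv_rhs => rw [← Nat.div_add_mod N m]
  induction N / m with
  | zero => simp
  | succ t ih =>
    rw [ih, show m * (t + 1) + N % m = m + (m * t + N % m) by ring, prod_range_add f m, hf1,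
      one_mul]
    exact prod_congr rfl fun k _ => by rw [add_comm, hf]

section RootOfUnity

variable {R : Type*} [CommRing R] {m : ℕ} {ζ a : R}

theorem sub_ne_zero_of_pow_eq_one (hζ : ζ ^ m = 1) (ha : a ^ m ≠ 1) : ζ - a ≠ 0 :=
  fun h => ha (sub_eq_zero.mp h ▸ hζ)

theorem mul_sub_one_ne_zero_of_pow_eq_one (hζ : ζ ^ m = 1) (ha : a ^ m ≠ 1) : a * ζ - 1 ≠ 0 :=
  fun h => ha (by rw [← one_pow m, ← sub_eq_zero.mp h, mul_pow, hζ, mul_one])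

end RootOfUnity

theorem natDegree_prod_C_mul_X_sub_C_le {R ι : Type*} [CommRing R] (s : Finset ι) (c d : ι → R) :
    (∏ i ∈ s, (C (c i) * Polynomial.X - C (d i))).natDegree ≤ #s := by
  refine (natDegree_prod_le _ _).trans ((sum_le_card_nsmul s _ 1 fun i _ => ?_).trans (by simp))
  rw [natDegree_sub_C]
  exact natDegree_C_mul_le _ _ |>.trans natDegree_X_le

theorem sub_zpow_div_sub_zpow_eq {K : Type*} [Field K] {ζ : K} (hζ : ζ ≠ 0) (b : K) (k : ℕ) :
    (b * ζ ^ k - ζ ^ (-(k : ℤ))) / (ζ ^ (k + 1) - b * ζ ^ (-((k : ℤ) + 1))) =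
      ζ * (b * (ζ ^ 2) ^ k - 1) / ((ζ ^ 2) ^ (k + 1) - b) := by
  rw [← mul_div_mul_right _ _ (pow_ne_zero (k + 1) hζ), ← Nat.cast_succ, zpow_neg, zpow_neg,
    zpow_natCast, zpow_natCast]
  congr 1 <;> field_simp <;> ring

theorem Q_ne_zero (m : ℕ) : Q m ≠ 0 := Complex.exp_ne_zero _

theorem Q_pow_self {m : ℕ} (hm : m ≠ 0) : Q m ^ m = -1 := by
  rw [Q, ← Complex.exp_nat_mul, mul_div_cancel₀ _ (Nat.cast_ne_zero.mpr hm), Complex.exp_pi_mul_I]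

theorem isPrimitiveRoot_Q_sq {m : ℕ} (hm : m ≠ 0) : IsPrimitiveRoot (Q m ^ 2) m := by
  rw [Q, ← Complex.exp_nat_mul]
  convert Complex.isPrimitiveRoot_exp m hm using 2
  push_cast
  ring

theorem X_eq_prod (m n : ℕ) (b : ℂ) :
    X m n b = ∏ k ∈ range n, Q m * (b * (Q m ^ 2) ^ k - 1) / ((Q m ^ 2) ^ (k + 1) - b) :=
  prod_congr rfl fun k _ => sub_zpow_div_sub_zpow_eq (Q_ne_zero m) b k

theorem X_one_div_eq_prod (m n : ℕ) {a : ℂ} (ha : a ≠ 0) :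
    X m n (1 / a) =
      ∏ k ∈ range n, Q m * ((Q m ^ 2) ^ k - a) / (a * (Q m ^ 2) ^ (k + 1) - 1) := by
  rw [X_eq_prod]
  refine prod_congr rfl fun k _ => ?_
  rw [← mul_div_mul_left _ _ ha]
  congr 1 <;> field_simp

theorem X_one_div_mod {m : ℕ} (hm : m ≠ 0) {a : ℂ} (ha0 : a ≠ 0) (ham : a ^ m ≠ 1) (N : ℕ) :
    X m (N % m) (1 / a) = X m N (1 / a) := by
  have hq := isPrimitiveRoot_Q_sq hm
  simp only [X_one_div_eq_prod m _ ha0]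
  refine prod_range_mod_of_periodic (fun k => ?_) ?_ N
  · simp only [add_right_comm k m 1, pow_add _ _ m, hq.pow_eq_one, mul_one]
  · have hnum : ∏ k ∈ range m, ((Q m ^ 2) ^ k - a) = (-1) ^ m * (a ^ m - 1) := by
      simpa using hq.prod_range_pow_mul_sub hm a 1
    have hden : ∏ k ∈ range m, (a * (Q m ^ 2) ^ (k + 1) - 1) = (-1) ^ m * (1 - a ^ m) := by
      have h := hq.prod_range_pow_mul_sub hm 1 (a * Q m ^ 2)
      rw [mul_pow, hq.pow_eq_one, mul_one, one_pow] at h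
      rw [← h]
      exact prod_congr rfl fun k _ => by ring
    have h1am : 1 - a ^ m ≠ 0 := sub_ne_zero.mpr (Ne.symm ham)
    rw [prod_div_distrib, prod_mul_distrib, prod_const, card_range, Q_pow_self hm, hnum, hden]
    field_simp
    ring

noncomputable def unitarityPoly (m j : ℕ) (q a : ℂ) : Polynomial ℂ :=
  Polynomial.X * (∏ i ∈ Ico 1 j, (C (q ^ i) * Polynomial.X - C a)) *
    ∏ i ∈ Ico (j + 1) m, (C (a * q ^ i) * Polynomial.X - 1)

theorem natDegree_unitarityPoly_lt {m j : ℕ} (hj : 1 ≤ j) (hjm : j < m) (q a : ℂ) :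
    (unitarityPoly m j q a).natDegree < m := by
  have h₁ := natDegree_prod_C_mul_X_sub_C_le (Ico 1 j) (fun i => q ^ i) fun _ => a
  have h₂ := natDegree_prod_C_mul_X_sub_C_le (Ico (j + 1) m) (fun i => a * q ^ i) fun _ => 1
  simp only [Nat.card_Ico, map_one] at h₁ h₂
  unfold unitarityPoly
  calc _ ≤ _ := natDegree_mul_le
    _ ≤ _ := add_le_add_left natDegree_mul_le _
    _ ≤ 1 + (j - 1) + (m - (j + 1)) := by gcongr; exact natDegree_X_le
    _ < m := by omega

theorem eval_zero_unitarityPoly (m j : ℕ) (q a : ℂ) : (unitarityPoly m j q a).eval 0 = 0 := by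
  simp [unitarityPoly]

theorem eval_unitarityPoly (m j : ℕ) (q a z : ℂ) : (unitarityPoly m j q a).eval z =
    z * (∏ i ∈ Ico 1 j, (q ^ i * z - a)) * ∏ i ∈ Ico (j + 1) m, (a * q ^ i * z - 1) := by
  simp [unitarityPoly, eval_prod]

theorem X_mul_X_one_div_add_mul_eq {m j : ℕ} (hj : 1 ≤ j) (hjm : j < m) {a : ℂ} (ha0 : a ≠ 0)
    (ham : a ^ m ≠ 1) (n : ℕ) :
    X m n a * X m (n + j) (1 / a) * ((-1) ^ m * (1 - a ^ m)) =
      Q m ^ j * (1 - a) * (a - 1) * (unitarityPoly m j (Q m ^ 2) a).eval ((Q m ^ 2) ^ n) := by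
  have hm : m ≠ 0 := by omega
  have hq := isPrimitiveRoot_Q_sq hm
  rw [X_eq_prod, X_one_div_eq_prod _ _ ha0, eval_unitarityPoly]
  simp only [prod_div_distrib, prod_mul_distrib, prod_const, card_range]
  set q := Q m ^ 2 with hq_def
  have hqk : ∀ k, (q ^ k) ^ m = 1 := fun k => by rw [pow_right_comm, hq.pow_eq_one, one_pow]
  have hB₁ : ∏ k ∈ range n, (q ^ (k + 1) - a) ≠ 0 :=
    prod_ne_zero_iff.mpr fun k _ => sub_ne_zero_of_pow_eq_one (hqk _) ham
  have hB₂ : ∏ k ∈ range (n + j), (a * q ^ (k + 1) - 1) ≠ 0 :=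
    prod_ne_zero_iff.mpr fun k _ => mul_sub_one_ne_zero_of_pow_eq_one (hqk _) ham
  have hnum : ∏ k ∈ range (n + j), (q ^ k - a) =
      (1 - a) * (∏ k ∈ range n, (q ^ (k + 1) - a)) * ∏ i ∈ Ico 1 j, (q ^ i * q ^ n - a) := by
    rw [← prod_range_mul_prod_Ico _ (by omega : n + 1 ≤ n + j), prod_range_succ', pow_zero,
      add_comm n 1, add_comm n j, ← prod_Ico_add']
    simp only [pow_add]
    ring
  have hden : (a - 1) * ∏ k ∈ range (n + j), (a * q ^ (k + 1) - 1) =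
      (∏ k ∈ range n, (a * q ^ k - 1)) * ∏ i ∈ range (j + 1), (a * q ^ i * q ^ n - 1) := by
    have h := prod_range_succ' (fun k => a * q ^ k - 1) (n + j)
    rw [add_assoc, prod_range_add, pow_zero, mul_one] at h
    rw [mul_comm, ← h]
    congr 1
    exact prod_congr rfl fun i _ => by ring
  have hfull : (∏ i ∈ range (j + 1), (a * q ^ i * q ^ n - 1)) *
      ∏ i ∈ Ico (j + 1) m, (a * q ^ i * q ^ n - 1) = (-1) ^ m * (1 - a ^ m) := by
    rw [prod_range_mul_prod_Ico _ (by omega : j + 1 ≤ m)]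
    have h := hq.prod_range_pow_mul_sub hm 1 (a * q ^ n)
    rw [mul_pow, hqk, mul_one, one_pow] at h
    rw [← h]
    exact prod_congr rfl fun k _ => by ring
  have hpow : Q m ^ n * Q m ^ (n + j) = Q m ^ j * q ^ n := by
    rw [hq_def, ← pow_mul, ← pow_add, ← pow_add]
    ring_nf
  rw [← hfull, hnum, div_mul_div_comm, div_mul_eq_mul_div, div_eq_iff (mul_ne_zero hB₁ hB₂)]
  set A₁ := ∏ k ∈ range n, (a * q ^ k - 1)
  set B₁ := ∏ k ∈ range n, (q ^ (k + 1) - a)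
  set N := ∏ i ∈ Ico 1 j, (q ^ i * q ^ n - a)
  set E := ∏ i ∈ range (j + 1), (a * q ^ i * q ^ n - 1)
  set F := ∏ i ∈ Ico (j + 1) m, (a * q ^ i * q ^ n - 1)
  linear_combination (1 - a) * B₁ * N * F * (A₁ * E * hpow - Q m ^ j * q ^ n * hden)

theorem sum_X_mul_X_one_div_mod_eq_zero {m j : ℕ} (hj : 1 ≤ j) (hjm : j < m) {a : ℂ}
    (ha0 : a ≠ 0) (ham : a ^ m ≠ 1) :
    ∑ n ∈ range m, X m n a * X m ((n + j) % m) (1 / a) = 0 := by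
  have hm : m ≠ 0 := by omega
  have hD : (-1) ^ m * (1 - a ^ m) ≠ 0 :=
    mul_ne_zero (pow_ne_zero _ (neg_ne_zero.mpr one_ne_zero)) (sub_ne_zero.mpr (Ne.symm ham))
  refine (mul_left_inj' hD).mp ?_
  simp_rw [sum_mul, X_one_div_mod hm ha0 ham, X_mul_X_one_div_add_mul_eq hj hjm ha0 ham, ← mul_sum,
    (isPrimitiveRoot_Q_sq hm).sum_eval_pow (natDegree_unitarityPoly_lt hj hjm _ _),
    eval_zero_unitarityPoly]
  simp

theorem stmt6_general (m : ℕ) (a : ℝ) (ha0 : a ≠ 0) (ha1 : a ≠ 1) (ha2 : a ≠ -1)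
    (j : ℕ) (hj1 : 1 ≤ j) (hj2 : j ≤ m - 1) :
    ∑ n ∈ Finset.range m, X m n (a : ℂ) * X m ((n + j) % m) (1 / (a : ℂ)) = 0 := by
  have ham : (a : ℂ) ^ m ≠ 1 := by
    norm_cast
    rw [pow_eq_one_iff_cases]
    rintro (hm | h1 | ⟨h2, -⟩)
    exacts [by omega, ha1 h1, ha2 h2]
  exact sum_X_mul_X_one_div_mod_eq_zero hj1 (by omega) (Complex.ofReal_ne_zero.mpr ha0) ham

/-- The off-diagonal unitarity sums vanish:
`∑_{n=0}^{m−1} X_n(a)·X_{(n+j) mod m}(1/a) = 0` for real `a ≠ 0, ±1` and `1 ≤ j ≤ m−1`. -/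
theorem stmt6 (m : ℕ) (hm : 1 ≤ m) (a : ℝ) (ha0 : a ≠ 0) (ha1 : a ≠ 1) (ha2 : a ≠ -1)
    (j : ℕ) (hj1 : 1 ≤ j) (hj2 : j ≤ m - 1) :
    ∑ n ∈ Finset.range m, X m n (a : ℂ) * X m ((n + j) % m) (1 / (a : ℂ)) = 0 :=
  stmt6_general m a ha0 ha1 ha2 j hj1 hj2
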